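/- Monotonicity of separability judgments: if Σ ≤ Σ', Γ ≤ Γ', Σ; Γ ⊢ τ : m, and m ≥ m', then Σ'; Γ' ⊢ τ : m'. -/
import Mathlib


/-- Separability modes. -/
inductive Mode : Type
  | ind | sep | deepsep
deriving DecidableEq

def Mode.toNat : Mode → ℕ
  | .ind => 0
  | .sep => 1
  | .deepsep => 2

instance : LinearOrder Mode :=
  LinearOrder.lift' Mode.toNat (fun a b => by cases a <;> cases b <;> simp [Mode.toNat])

/-- Mode composition: Ind ∘ m = Ind, Sep ∘ m = m, Deepsep ∘ m = Deepsep. -/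
def Mode.comp : Mode → Mode → Mode
  | .ind, _ => .ind
  | .sep, m => m
  | .deepsep, _ => .deepsep

/-- Constraint-free type expressions: variables, builtins, constructor
applications, arrows, products, universals and existentials. -/
inductive Ty : Type
  | var : ℕ → Ty
  | tfloat : Ty
  | tint : Ty
  | tbool : Ty
  | constr : ℕ → (n : ℕ) → (Fin n → Ty) → Ty
  | arrow : Ty → Ty → Ty
  | prod : (n : ℕ) → (Fin n → Ty) → Ty
  | all : ℕ → Ty → Ty
  | ex : ℕ → Ty → Ty

/-- A mode signature assigns a mode to each parameter of each type constructor. -/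
abbrev Sig := ℕ → ℕ → Mode

/-- A context assigns a mode to each type variable. -/
abbrev Ctx := ℕ → Mode

/-- Context update. -/
def Ctx.upd (Γ : Ctx) (a : ℕ) (m : Mode) : Ctx :=
  fun x => if x = a then m else Γ x

/-- The separability inference system with the variable axiom and the
conversion rule. -/
inductive Derives (Sg : Sig) : Ctx → Ty → Mode → Prop
  | var {Γ a m} : Γ a = m → Derives Sg Γ (.var a) m
  | conv {Γ τ m n} : Derives Sg Γ τ m → n ≤ m → Derives Sg Γ τ n
  | tfloat {Γ m} : Derives Sg Γ .tfloat m
  | tint {Γ m} : Derives Sg Γ .tint m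
  | tbool {Γ m} : Derives Sg Γ .tbool m
  | constr {Γ t n f m} :
      (∀ i : Fin n, Derives Sg Γ (f i) (Mode.comp m (Sg t i))) →
      Derives Sg Γ (.constr t n f) m
  | arrow {Γ τ₁ τ₂ m} :
      Derives Sg Γ τ₁ (Mode.comp m .ind) → Derives Sg Γ τ₂ (Mode.comp m .ind) →
      Derives Sg Γ (.arrow τ₁ τ₂) m
  | prod {Γ n f m} :
      (∀ i : Fin n, Derives Sg Γ (f i) (Mode.comp m .ind)) →
      Derives Sg Γ (.prod n f) m
  | all {Γ a τ m} (n : Mode) : Derives Sg (Γ.upd a n) τ m → Derives Sg Γ (.all a τ) m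
  | ex {Γ a τ m} : Derives Sg (Γ.upd a .ind) τ m → Derives Sg Γ (.ex a τ) m

/-- Pointwise order on contexts. -/
def Ctx.le (Γ Γ' : Ctx) : Prop := ∀ a, Γ a ≤ Γ' a

/-- Order on signatures: parameter modes are compared contravariantly. -/
def Sig.le (Sg1 Sg2 : Sig) : Prop := ∀ t i, Sg2 t i ≤ Sg1 t i


lemma Mode.comp_mono {a b c d : Mode} (h1 : a ≤ b) (h2 : c ≤ d) :
    Mode.comp a c ≤ Mode.comp b d := by
  revert h1 h2; cases a <;> cases b <;> cases c <;> cases d <;> decide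

lemma Ctx.le_upd {Γ Γ' : Ctx} (h : Ctx.le Γ Γ') (a : ℕ) (n : Mode) :
    Ctx.le (Γ.upd a n) (Γ'.upd a n) := by
  intro x; unfold Ctx.upd; split <;> [exact le_rfl; exact h x]

/-- Monotonicity: if Sg1 ≤ Sg2, Γ ≤ Γ', Sg1; Γ ⊢ τ : m and m ≥ m',
then Sg2; Γ' ⊢ τ : m'. -/
theorem derives_monotone {Sg1 Sg2 : Sig} {Γ Γ' : Ctx} {τ : Ty} {m m' : Mode}
    (hS : Sig.le Sg1 Sg2) (hΓ : Ctx.le Γ Γ') (h : Derives Sg1 Γ τ m) (hm : m' ≤ m) :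
    Derives Sg2 Γ' τ m' := by
  induction h generalizing Γ' m' with
  | var ha =>
    exact .conv (.var rfl) (hm.trans (ha ▸ hΓ _))
  | conv _ hnm ih => exact ih hΓ (hm.trans hnm)
  | tfloat => exact .tfloat
  | tint => exact .tint
  | tbool => exact .tbool
  | constr _ ih =>
    exact .constr fun i => ih i hΓ (Mode.comp_mono hm (hS _ _))
  | arrow _ _ ih1 ih2 =>
    exact .arrow (ih1 hΓ (Mode.comp_mono hm le_rfl)) (ih2 hΓ (Mode.comp_mono hm le_rfl))
  | prod _ ih =>
    exact .prod fun i => ih i hΓ (Mode.comp_mono hm le_rfl)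
  | all n _ ih => exact .all n (ih (Ctx.le_upd hΓ _ n) hm)
  | ex _ ih => exact .ex (ih (Ctx.le_upd hΓ _ .ind) hm)
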